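/- arXiv:1202.1515 — 2 statements merged into one kernel-verified Lean document; each statement's English description precedes it below -/
import Mathlib

section
/- Let R be a commutative ring and let n, N be positive integers. Let A be a square matrix over R indexed by (Fin n) × (Fin N), regarded as an n×n array of N×N blocks B_{ij}, and suppose each block has constant row sums: there is a matrix s : Matrix (Fin n) (Fin n) R such that for all i, j and every row index a, ∑_{b} B_{ij}(a,b) = s(i,j). Then det(s) divides det(A) in R. -/
/-!
The vectors that are constant on each block are spanned by the columns `(j, b₀)` of the
unimodular matrix `P = 1 ⊗ₖ Q`, where `Q` is the identity with column `b₀` replaced by ones.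
Constant block row sums say exactly that `A` maps this span into itself, acting there by `s`;
so `P⁻¹ A P` is block upper-triangular with `s` as a diagonal block.
-/

open scoped Kronecker

namespace Matrix

variable {R : Type*} [CommRing R]

theorem det_dvd_det_of_mul_submatrix_inl_eq {m k : Type*} [Fintype m] [Fintype k]
    [DecidableEq m] [DecidableEq k] (A P : Matrix (m ⊕ k) (m ⊕ k) R) (hP : IsUnit P.det)
    (s : Matrix m m R) (h : A * P.submatrix id Sum.inl = P.submatrix id Sum.inl * s) :
    s.det ∣ A.det := by
  have hB : (P⁻¹ * A * P).submatrix id Sum.inl =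
      (1 : Matrix (m ⊕ k) (m ⊕ k) R).submatrix id Sum.inl * s :=
    calc (P⁻¹ * A * P).submatrix id Sum.inl = P⁻¹ * (A * P.submatrix id Sum.inl) := by
          rw [← Matrix.mul_assoc]; rfl
      _ = (P⁻¹ * P).submatrix id Sum.inl * s := by
          rw [h, ← Matrix.mul_assoc]; rfl
      _ = _ := by rw [nonsing_inv_mul P hP]
  rw [← det_conj' ((isUnit_iff_isUnit_det P).mpr hP) A]
  generalize P⁻¹ * A * P = B at hB ⊢
  have h₁₁ : B.toBlocks₁₁ = s := by
    change (B.submatrix id Sum.inl).submatrix Sum.inl id = s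
    rw [hB]
    change (1 : Matrix (m ⊕ k) (m ⊕ k) R).submatrix Sum.inl Sum.inl * s = s
    rw [submatrix_one _ Sum.inl_injective, Matrix.one_mul]
  have h₂₁ : B.toBlocks₂₁ = 0 := by
    change (B.submatrix id Sum.inl).submatrix Sum.inr id = 0
    rw [hB]
    change (1 : Matrix (m ⊕ k) (m ⊕ k) R).submatrix Sum.inr Sum.inl * s = 0
    rw [show (1 : Matrix (m ⊕ k) (m ⊕ k) R).submatrix Sum.inr Sum.inl = 0 by ext; simp,
      Matrix.zero_mul]
  refine ⟨B.toBlocks₂₂.det, ?_⟩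
  calc B.det = (fromBlocks s B.toBlocks₁₂ 0 B.toBlocks₂₂).det := by
        rw [← h₁₁, ← h₂₁, fromBlocks_toBlocks]
    _ = s.det * B.toBlocks₂₂.det := det_fromBlocks_zero₂₁ ..

theorem det_dvd_det_of_mul_submatrix_eq {ι m : Type*} [Fintype ι] [Fintype m]
    [DecidableEq ι] [DecidableEq m] (A P : Matrix ι ι R) (hP : IsUnit P.det)
    {f : m → ι} (hf : Function.Injective f) (s : Matrix m m R)
    (h : A * P.submatrix id f = P.submatrix id f * s) :
    s.det ∣ A.det := by
  classical
  let e : m ⊕ ↥(Set.range f)ᶜ ≃ ι :=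
    (Equiv.sumCongr (Equiv.ofInjective f hf) (Equiv.refl _)).trans (Equiv.Set.sumCompl _)
  have he : e ∘ Sum.inl = f := funext fun j => by simp [e]
  rw [← det_submatrix_equiv_self e A]
  refine det_dvd_det_of_mul_submatrix_inl_eq _ (P.submatrix e e)
    (by rwa [det_submatrix_equiv_self]) s ?_
  rw [submatrix_submatrix, Function.comp_id, he, submatrix_mul_equiv]
  change (A * P.submatrix id f).submatrix e id = _
  rw [h]
  rfl

theorem det_updateCol_one {n : Type*} [Fintype n] [DecidableEq n] (j : n) (v : n → R) :
    ((1 : Matrix n n R).updateCol j v).det = v j := by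
  rw [← cramer_apply, cramer_one]
  rfl

theorem det_dvd_det_of_block_row_sums_eq {α β : Type*} [Fintype α] [Fintype β]
    [DecidableEq α] [DecidableEq β] [Nonempty β]
    (A : Matrix (α × β) (α × β) R) (s : Matrix α α R)
    (hs : ∀ i j a, ∑ b, A (i, a) (j, b) = s i j) :
    s.det ∣ A.det := by
  obtain ⟨b₀⟩ := ‹Nonempty β›
  let P : Matrix (α × β) (α × β) R := 1 ⊗ₖ (1 : Matrix β β R).updateCol b₀ 1
  have hP : IsUnit P.det := by simp [P, det_kronecker, det_updateCol_one]
  have hcol : P.submatrix id (fun j => (j, b₀)) = of fun p j => if p.1 = j then 1 else 0 := by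
    ext ⟨i, a⟩ j
    simp [P, one_apply]
  refine det_dvd_det_of_mul_submatrix_eq A P hP (Prod.mk_left_injective b₀) s ?_
  ext ⟨i, a⟩ j
  simp only [hcol, mul_apply, of_apply, mul_ite, mul_one, mul_zero, Fintype.sum_prod_type]
  rw [Finset.sum_comm]
  simp [hs]

end Matrix

theorem det_blockRowSums_dvd_det_general
    (R : Type*) [CommRing R] (n N : ℕ) (hN : 0 < N)
    (A : Matrix (Fin n × Fin N) (Fin n × Fin N) R)
    (s : Matrix (Fin n) (Fin n) R)
    (hs : ∀ i j : Fin n, ∀ a : Fin N, ∑ b : Fin N, A (i, a) (j, b) = s i j) :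
    s.det ∣ A.det :=
  have : Nonempty (Fin N) := Fin.pos_iff_nonempty.mp hN
  Matrix.det_dvd_det_of_block_row_sums_eq A s hs

/-- If a block matrix `A` (an `n×n` array of `N×N` blocks) has blocks with
constant row sums given by the matrix `s`, then `det s` divides `det A`. -/
theorem det_blockRowSums_dvd_det
    (R : Type*) [CommRing R] (n N : ℕ) (hn : 0 < n) (hN : 0 < N)
    (A : Matrix (Fin n × Fin N) (Fin n × Fin N) R)
    (s : Matrix (Fin n) (Fin n) R)
    (hs : ∀ i j : Fin n, ∀ a : Fin N, ∑ b : Fin N, A (i, a) (j, b) = s i j) :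
    s.det ∣ A.det :=
  det_blockRowSums_dvd_det_general R n N hN A s hs
end

section
/- Let R be a commutative ring, let n and N be natural numbers, and let B, C : Matrix (Fin n) (Fin n) R be square matrices such that C has at most N nonzero rows (there is a finite set S of row indices with card S ≤ N such that every row of C with index outside S is zero). Then there exist c_0, c_1, …, c_N ∈ R such that for every q ∈ R, det(B + q • C) = ∑_{k=0}^{N} c_k · q^k. -/
/-! In the Leibniz expansion of `det (B + X • C)` over `R[X]`, each term takes one entry from
every row, and only the entries from the nonzero rows of `C` have degree `1` in `X`; so the
determinant has degree at most the number of such rows, and evaluating it at `q` gives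
`det (B + q • C)`. -/

open Polynomial

namespace Matrix

variable {n R : Type*} [DecidableEq n] [Fintype n] [CommRing R]

theorem natDegree_det_le_sum_of_natDegree_row_le (M : Matrix n n R[X]) (d : n → ℕ)
    (h : ∀ i j, (M i j).natDegree ≤ d i) : M.det.natDegree ≤ ∑ i, d i := by
  rw [det_apply]
  refine natDegree_sum_le_of_forall_le _ _ fun σ _ => ?_
  calc (Equiv.Perm.sign σ • ∏ i, M (σ i) i).natDegree
      ≤ (∏ i, M (σ i) i).natDegree := natDegree_smul_le _ _
    _ ≤ ∑ i, (M (σ i) i).natDegree := natDegree_prod_le _ _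
    _ ≤ ∑ i, d (σ i) := Finset.sum_le_sum fun i _ => h (σ i) i
    _ = ∑ i, d i := Equiv.sum_comp σ d

theorem natDegree_det_map_C_add_X_smul_le (A B : Matrix n n R) {S : Finset n}
    (hA : ∀ i ∉ S, ∀ j, A i j = 0) :
    (B.map C + (X : R[X]) • A.map C).det.natDegree ≤ S.card := by
  have hrow : ∀ i j, ((B.map C + (X : R[X]) • A.map C) i j).natDegree ≤
      if i ∈ S then 1 else 0 := by
    intro i j
    split_ifs with hi
    · simp only [add_apply, map_apply, smul_apply, smul_eq_mul]
      compute_degree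
    · simp [hA i hi j]
  simpa using natDegree_det_le_sum_of_natDegree_row_le _ _ hrow

theorem eval_det_map_C_add_X_smul (A B : Matrix n n R) (q : R) :
    (B.map C + (X : R[X]) • A.map C).det.eval q = (B + q • A).det := by
  rw [← coe_evalRingHom, RingHom.map_det]
  congr 1
  ext i j
  simp only [RingHom.mapMatrix_apply, map_apply, add_apply, smul_apply, smul_eq_mul,
    coe_evalRingHom, eval_add, eval_mul, eval_C, eval_X]

end Matrix

/-- If `C` has at most `N` nonzero rows, then `det (B + q • C)` is a polynomial
of degree at most `N` in `q`. -/
theorem det_add_smul_eq_poly_of_few_rows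
    (R : Type*) [CommRing R] (n N : ℕ)
    (B C : Matrix (Fin n) (Fin n) R)
    (hC : ∃ S : Finset (Fin n), S.card ≤ N ∧ ∀ i ∉ S, ∀ j, C i j = 0) :
    ∃ c : ℕ → R, ∀ q : R,
      (B + q • C).det = ∑ k ∈ Finset.range (N + 1), c k * q ^ k := by
  obtain ⟨S, hS, hrow⟩ := hC
  set P := (B.map Polynomial.C + (X : R[X]) • C.map Polynomial.C).det
  have hP : P.natDegree < N + 1 :=
    Nat.lt_succ_of_le ((Matrix.natDegree_det_map_C_add_X_smul_le C B hrow).trans hS)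
  refine ⟨P.coeff, fun q => ?_⟩
  rw [← Matrix.eval_det_map_C_add_X_smul, eval_eq_sum_range' hP]
end
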